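/- For every n ≥ 2, the sum over all link patterns π of n−1 strands of (exposure number of π) + 1 equals the Catalan number C_n; equivalently, the set of link patterns of n strands is the disjoint union, over link patterns π of n−1 strands, of the fibers e⁻¹(π′) where π′ is the insertion of a strand at the end of π. -/

import Mathlib

/-- A link pattern of `n` strands: a fixed-point-free involution of `{0, …, 2n-1}`
that is noncrossing. -/
def IsLinkPattern (n : ℕ) (μ : Fin (2*n) → Fin (2*n)) : Prop :=
  (∀ i, μ (μ i) = i) ∧ (∀ i, μ i ≠ i) ∧
  (∀ a b c d : Fin (2*n), a < b → b < c → c < d → μ a = c → μ b = d → False)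

noncomputable instance (n : ℕ) :
    Fintype {μ : Fin (2*n) → Fin (2*n) // IsLinkPattern n μ} :=
  Fintype.ofFinite _

/-- The exposure number of `μ`: the number of outermost links `(a, b)` (pairs with
`a < b`, `μ a = b`, such that there is no link `(c, d)` with `c < a` and `b < d`). -/
noncomputable def exposure (n : ℕ) (μ : Fin (2*n) → Fin (2*n)) : ℕ :=
  Nat.card {p : Fin (2*n) × Fin (2*n) //
    p.1 < p.2 ∧ μ p.1 = p.2 ∧ ∀ c d : Fin (2*n), c < p.1 → p.2 < d → μ c ≠ d}

/-- The Temperley–Lieb generator `e` (acting at the sites `2n-2`, `2n-1`). -/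
def eFun (n : ℕ) (μ : Fin (2*n) → Fin (2*n)) : Fin (2*n) → Fin (2*n) := fun i =>
  if h : 1 ≤ n then
    let a : Fin (2*n) := ⟨2*n - 2, by omega⟩
    let b : Fin (2*n) := ⟨2*n - 1, by omega⟩
    if μ a = b then μ i
    else if i = a then b
    else if i = b then a
    else if i = μ a then μ b
    else if i = μ b then μ a
    else μ i
  else μ i

/-- Insertion of a strand at the end. -/
def insertEnd (m : ℕ) (π : Fin (2*m) → Fin (2*m)) : Fin (2*(m+1)) → Fin (2*(m+1)) :=
  fun i =>
    if h : (i : ℕ) < 2*m then Fin.castLE (by omega) (π ⟨(i : ℕ), h⟩)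
    else if (i : ℕ) = 2*m then ⟨2*m + 1, by omega⟩
    else ⟨2*m, by omega⟩


/-!
On a link pattern `μ` of `m + 1` strands, `e` acts as conjugation by the transposition of
`μ (2m)` and `2m + 1`, so `e μ` links the last two sites: it is the insertion `π'` of a unique
`π`. Since this conjugation can be undone, the preimages of `π'` are `π'` itself and the
conjugates of `π'` by the transpositions of `q` and `2m + 1`, where `(p, q)` is a link of `π`;
such a conjugate links `p` to `2m + 1` and `q` to `2m`, and it is noncrossing exactly when
`(p, q)` is outermost. Hence the fiber over `π'` has `exposure π + 1` elements, and summing over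
`π` counts the link patterns of `m + 1` strands. These number `catalan (m + 1)` by the first-arc
recursion: the partner of `0` is some `2k + 1` (the sites inside a link pair up among
themselves), splitting the pattern into one of `k` strands inside that arc and one of `m - k`
strands after it.
-/

open Finset Function

def IsNoncrossing {α : Type*} [LT α] (μ : α → α) : Prop :=
  ∀ a b c d, a < b → b < c → c < d → μ a = c → μ b = d → False

abbrev LinkPattern (n : ℕ) : Type := {μ : Fin (2*n) → Fin (2*n) // IsLinkPattern n μ}

namespace IsNoncrossing

variable {α : Type*} [LinearOrder α] {μ : α → α}

theorem apply_mem_Ioo (hμ : IsNoncrossing μ) (hinv : Involutive μ) {i j : α} (hij : i < j)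
    (hj : j < μ i) : μ j ∈ Set.Ioo i (μ i) := by
  have hi : μ j ≠ i := fun e => hj.ne (by rw [← e, hinv])
  have hk : μ j ≠ μ i := fun e => hij.ne' (hinv.injective e)
  constructor
  · by_contra! h
    exact hμ (μ j) i j (μ i) (h.lt_of_ne hi) hij hj (hinv j) rfl
  · by_contra! h
    exact hμ i j (μ i) (μ j) hij hj (h.lt_of_ne' hk) rfl rfl

theorem apply_notMem_Icc (hμ : IsNoncrossing μ) (hinv : Involutive μ) {i j : α} (hi : i < μ i)
    (hj : j ∉ Set.Icc i (μ i)) : μ j ∉ Set.Icc i (μ i) := by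
  rintro ⟨h₁, h₂⟩
  rcases h₁.eq_or_lt with e | h₁
  · have hj' : j = μ i := by rw [e, hinv]
    exact hj ⟨hj' ▸ hi.le, hj'.le⟩
  rcases h₂.eq_or_lt with e | h₂
  · exact hj (by rw [hinv.injective e]; exact ⟨le_rfl, hi.le⟩)
  have := hμ.apply_mem_Ioo hinv h₁ h₂
  rw [hinv] at this
  exact hj ⟨this.1.le, this.2.le⟩

end IsNoncrossing

theorem IsLinkPattern.involutive {n : ℕ} {μ : Fin (2*n) → Fin (2*n)} (h : IsLinkPattern n μ) :
    Involutive μ := h.1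

theorem IsLinkPattern.isNoncrossing {n : ℕ} {μ : Fin (2*n) → Fin (2*n)}
    (h : IsLinkPattern n μ) : IsNoncrossing μ := h.2.2

theorem Finset.even_card_of_involutive {α : Type*} [DecidableEq α] {s : Finset α} {f : α → α}
    (hs : ∀ x ∈ s, f x ∈ s) (hinv : ∀ x ∈ s, f (f x) = x) (hfix : ∀ x ∈ s, f x ≠ x) :
    Even s.card := by
  let g : s → s := fun x => ⟨f x, hs x x.2⟩
  have hg : Involutive g := fun x => Subtype.ext (hinv x x.2)
  have hsupp : hg.toPerm.support = univ := eq_univ_of_forall fun x =>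
    Equiv.Perm.mem_support.2 fun e => hfix x x.2 (congrArg Subtype.val e)
  have := Equiv.Perm.two_dvd_card_support (σ := hg.toPerm) (by ext x; simp [sq, hg x])
  rwa [hsupp, card_univ, Fintype.card_coe, ← even_iff_two_dvd] at this

/-- Link patterns of `n` strands, seen as involutions of `ℕ` whose fixed points are exactly the
`i ≥ 2n`. -/
def IsNatLinkPattern (n : ℕ) (f : ℕ → ℕ) : Prop :=
  Involutive f ∧ (∀ i, f i = i ↔ 2 * n ≤ i) ∧ IsNoncrossing f

namespace IsNatLinkPattern

variable {n : ℕ} {f : ℕ → ℕ}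

theorem apply_lt (hf : IsNatLinkPattern n f) {i : ℕ} (hi : i < 2 * n) : f i < 2 * n := by
  by_contra! h
  have := (hf.2.1 (f i)).2 h
  rw [hf.1 i] at this
  exact absurd ((hf.2.1 i).1 this.symm) (by omega)

theorem apply_ne (hf : IsNatLinkPattern n f) {i : ℕ} (hi : i < 2 * n) : f i ≠ i :=
  fun e => absurd ((hf.2.1 i).1 e) (by omega)

theorem apply_of_le (hf : IsNatLinkPattern n f) {i : ℕ} (hi : 2 * n ≤ i) : f i = i :=
  (hf.2.1 i).2 hi

theorem apply_zero_lt_apply (hf : IsNatLinkPattern n f) (h0 : 0 < f 0) {i : ℕ} (hi : f 0 < i) :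
    f 0 < f i := by
  have := hf.2.2.apply_notMem_Icc hf.1 h0 (j := i) fun h => hi.not_ge h.2
  simpa using this

theorem odd_apply_zero (hf : IsNatLinkPattern n f) (hn : 0 < n) : Odd (f 0) := by
  have h0 : 0 < f 0 := Nat.pos_of_ne_zero (hf.apply_ne (by omega))
  have := even_card_of_involutive (s := Ioo 0 (f 0))
    (fun x hx => mem_Ioo.2 (hf.2.2.apply_mem_Ioo hf.1 (mem_Ioo.1 hx).1 (mem_Ioo.1 hx).2))
    (fun x _ => hf.1 x)
    (fun x hx => hf.apply_ne (lt_trans (mem_Ioo.1 hx).2 (hf.apply_lt (by omega))))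
  rw [Nat.card_Ioo] at this
  exact Nat.odd_iff.2 (by obtain ⟨k, hk⟩ := this; omega)

theorem exists_apply_zero_eq (hf : IsNatLinkPattern (n + 1) f) : ∃ k ≤ n, f 0 = 2 * k + 1 := by
  obtain ⟨k, hk⟩ := hf.odd_apply_zero n.succ_pos
  exact ⟨k, by have := hf.apply_lt (i := 0) (by omega); omega, hk⟩

end IsNatLinkPattern

def extendNat {N : ℕ} (μ : Fin N → Fin N) : ℕ → ℕ := fun i => if h : i < N then μ ⟨i, h⟩ else i

theorem IsLinkPattern.isNatLinkPattern_extendNat {n : ℕ} {μ : Fin (2*n) → Fin (2*n)}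
    (h : IsLinkPattern n μ) : IsNatLinkPattern n (extendNat μ) := by
  refine ⟨fun i => ?_, fun i => ?_, fun a b c d hab hbc hcd hac hbd => ?_⟩
  · by_cases hi : i < 2 * n <;> simp [extendNat, hi, h.1 _]
  · by_cases hi : i < 2 * n
    · simp only [extendNat, hi, dif_pos]
      exact iff_of_false (fun e => h.2.1 ⟨i, hi⟩ (Fin.ext e)) (by omega)
    · simp [extendNat, hi]; omega
  · have hb : b < 2 * n := by
      by_contra hb; simp [extendNat, hb] at hbd; omega
    have ha : a < 2 * n := by omega
    simp only [extendNat, ha, hb, dif_pos] at hac hbd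
    exact h.2.2 ⟨a, ha⟩ ⟨b, hb⟩ ⟨c, by omega⟩ ⟨d, by omega⟩ hab hbc hcd (Fin.ext hac)
      (Fin.ext hbd)

theorem IsNatLinkPattern.isLinkPattern_restrict {n : ℕ} {f : ℕ → ℕ}
    (hf : IsNatLinkPattern n f) : IsLinkPattern n fun i => ⟨f i, hf.apply_lt i.2⟩ :=
  ⟨fun i => Fin.ext (hf.1 i), fun i e => hf.apply_ne i.2 (congrArg Fin.val e),
    fun a b c d hab hbc hcd hac hbd =>
      hf.2.2 a b c d hab hbc hcd (congrArg Fin.val hac) (congrArg Fin.val hbd)⟩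

def linkPatternEquivNat (n : ℕ) : LinkPattern n ≃ {f : ℕ → ℕ // IsNatLinkPattern n f} where
  toFun μ := ⟨extendNat μ.1, μ.2.isNatLinkPattern_extendNat⟩
  invFun f := ⟨_, f.2.isLinkPattern_restrict⟩
  left_inv μ := by ext i; simp [extendNat]
  right_inv f := by
    ext i
    by_cases hi : i < 2 * n
    · simp [extendNat, hi]
    · simp [extendNat, hi, f.2.apply_of_le (not_lt.1 hi)]

instance (n : ℕ) : Finite {f : ℕ → ℕ // IsNatLinkPattern n f} :=
  Finite.of_equiv _ (linkPatternEquivNat n)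

/-- The pattern of `n` strands that `f` induces on the sites `[s, s + 2n)`, moved to `[0, 2n)`. -/
def subpattern (s n : ℕ) (f : ℕ → ℕ) : ℕ → ℕ := fun i => if i < 2 * n then f (i + s) - s else i

/-- The arc `(0, 2k + 1)` enclosing `f₁` (shifted by `1`), followed by `f₂` (shifted by
`2k + 2`). -/
def wrapConcat (k n : ℕ) (f₁ f₂ : ℕ → ℕ) : ℕ → ℕ := fun i =>
  if i = 0 then 2 * k + 1
  else if i = 2 * k + 1 then 0
  else if i < 2 * k + 1 then f₁ (i - 1) + 1
  else if i < 2 * k + 2 * n + 2 then f₂ (i - (2 * k + 2)) + (2 * k + 2)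
  else i

theorem subpattern_of_lt {s n i : ℕ} (f : ℕ → ℕ) (hi : i < 2 * n) :
    subpattern s n f i = f (i + s) - s := if_pos hi

theorem subpattern_of_le {s n i : ℕ} (f : ℕ → ℕ) (hi : 2 * n ≤ i) : subpattern s n f i = i :=
  if_neg (by omega)

theorem IsNatLinkPattern.subpattern {N s n : ℕ} {f : ℕ → ℕ} (hf : IsNatLinkPattern N f)
    (hN : s + 2 * n ≤ 2 * N) (hmaps : ∀ i, s ≤ i → i < s + 2 * n → s ≤ f i ∧ f i < s + 2 * n) :
    IsNatLinkPattern n (subpattern s n f) := by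
  have key : ∀ i < 2 * n, s ≤ f (i + s) ∧ f (i + s) < s + 2 * n ∧ f (i + s) ≠ i + s :=
    fun i hi => ⟨(hmaps _ (by omega) (by omega)).1, (hmaps _ (by omega) (by omega)).2,
      hf.apply_ne (by omega)⟩
  refine ⟨fun i => ?_, fun i => ?_, fun a b c d hab hbc hcd hac hbd => ?_⟩
  · by_cases hi : i < 2 * n
    · have := key i hi
      rw [subpattern_of_lt f hi, subpattern_of_lt f (by omega),
        show f (i + s) - s + s = f (i + s) by omega, hf.1]
      omega
    · rw [subpattern_of_le f (not_lt.1 hi), subpattern_of_le f (not_lt.1 hi)]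
  · by_cases hi : i < 2 * n
    · have := key i hi
      rw [subpattern_of_lt f hi]
      omega
    · rw [subpattern_of_le f (not_lt.1 hi)]
      exact iff_of_true rfl (not_lt.1 hi)
  · have hb : b < 2 * n := by
      by_contra hb; rw [subpattern_of_le f (by omega)] at hbd; omega
    have := key a (by omega)
    have := key b hb
    rw [subpattern_of_lt f (by omega)] at hac
    rw [subpattern_of_lt f hb] at hbd
    exact hf.2.2 (a + s) (b + s) (c + s) (d + s) (by omega) (by omega) (by omega) (by omega)
      (by omega)

section wrapConcat

variable {k n : ℕ} {f₁ f₂ : ℕ → ℕ}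

theorem wrapConcat_zero : wrapConcat k n f₁ f₂ 0 = 2 * k + 1 := if_pos rfl

theorem wrapConcat_two_mul_add_one : wrapConcat k n f₁ f₂ (2 * k + 1) = 0 := by
  simp [wrapConcat]

theorem wrapConcat_of_inner {i : ℕ} (h0 : 0 < i) (hi : i ≤ 2 * k) :
    wrapConcat k n f₁ f₂ i = f₁ (i - 1) + 1 := by
  simp only [wrapConcat]; split_ifs <;> omega

theorem wrapConcat_of_outer {i : ℕ} (h0 : 2 * k + 2 ≤ i) (hi : i < 2 * (k + n + 1)) :
    wrapConcat k n f₁ f₂ i = f₂ (i - (2 * k + 2)) + (2 * k + 2) := by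
  simp only [wrapConcat]; split_ifs <;> omega

theorem wrapConcat_of_le {i : ℕ} (hi : 2 * (k + n + 1) ≤ i) : wrapConcat k n f₁ f₂ i = i := by
  simp only [wrapConcat]; split_ifs <;> omega

theorem involutive_wrapConcat (h₁ : IsNatLinkPattern k f₁) (h₂ : IsNatLinkPattern n f₂) :
    Involutive (wrapConcat k n f₁ f₂) := by
  intro i
  rcases Nat.eq_zero_or_pos i with rfl | h0
  · rw [wrapConcat_zero, wrapConcat_two_mul_add_one]
  rcases lt_trichotomy i (2 * k + 1) with hi | rfl | hi
  · have := h₁.apply_lt (i := i - 1) (by omega)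
    rw [wrapConcat_of_inner h0 (by omega), wrapConcat_of_inner (by omega) (by omega),
      Nat.add_sub_cancel, h₁.1]
    omega
  · rw [wrapConcat_two_mul_add_one, wrapConcat_zero]
  by_cases hi' : i < 2 * (k + n + 1)
  · have := h₂.apply_lt (i := i - (2 * k + 2)) (by omega)
    rw [wrapConcat_of_outer hi hi', wrapConcat_of_outer (by omega) (by omega),
      Nat.add_sub_cancel, h₂.1]
    omega
  · rw [wrapConcat_of_le (not_lt.1 hi'), wrapConcat_of_le (not_lt.1 hi')]

theorem wrapConcat_eq_self_iff (h₁ : IsNatLinkPattern k f₁) (h₂ : IsNatLinkPattern n f₂)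
    (i : ℕ) : wrapConcat k n f₁ f₂ i = i ↔ 2 * (k + n + 1) ≤ i := by
  rcases Nat.eq_zero_or_pos i with rfl | h0
  · rw [wrapConcat_zero]; omega
  rcases lt_trichotomy i (2 * k + 1) with hi | rfl | hi
  · have := h₁.apply_ne (i := i - 1) (by omega)
    rw [wrapConcat_of_inner h0 (by omega)]
    omega
  · rw [wrapConcat_two_mul_add_one]; omega
  by_cases hi' : i < 2 * (k + n + 1)
  · have := h₂.apply_ne (i := i - (2 * k + 2)) (by omega)
    rw [wrapConcat_of_outer hi hi']
    omega
  · rw [wrapConcat_of_le (not_lt.1 hi')]; omega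

theorem isNoncrossing_wrapConcat (h₁ : IsNatLinkPattern k f₁) (h₂ : IsNatLinkPattern n f₂) :
    IsNoncrossing (wrapConcat k n f₁ f₂) := by
  intro a b c d hab hbc hcd hac hbd
  rcases Nat.eq_zero_or_pos a with rfl | ha0
  · rw [wrapConcat_zero] at hac
    rw [wrapConcat_of_inner (by omega) (by omega)] at hbd
    have := h₁.apply_lt (i := b - 1) (by omega)
    omega
  rcases lt_trichotomy a (2 * k + 1) with ha | rfl | ha
  · rw [wrapConcat_of_inner ha0 (by omega)] at hac
    have := h₁.apply_lt (i := a - 1) (by omega)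
    rw [wrapConcat_of_inner (by omega) (by omega)] at hbd
    exact h₁.2.2 (a - 1) (b - 1) (c - 1) (d - 1) (by omega) (by omega) (by omega) (by omega)
      (by omega)
  · rw [wrapConcat_two_mul_add_one] at hac; omega
  by_cases ha' : a < 2 * (k + n + 1)
  · rw [wrapConcat_of_outer ha ha'] at hac
    have := h₂.apply_lt (i := a - (2 * k + 2)) (by omega)
    rw [wrapConcat_of_outer (by omega) (by omega)] at hbd
    exact h₂.2.2 (a - (2 * k + 2)) (b - (2 * k + 2)) (c - (2 * k + 2)) (d - (2 * k + 2))
      (by omega) (by omega) (by omega) (by omega) (by omega)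
  · rw [wrapConcat_of_le (not_lt.1 ha')] at hac; omega

theorem IsNatLinkPattern.wrapConcat (h₁ : IsNatLinkPattern k f₁) (h₂ : IsNatLinkPattern n f₂) :
    IsNatLinkPattern (k + n + 1) (wrapConcat k n f₁ f₂) :=
  ⟨involutive_wrapConcat h₁ h₂, wrapConcat_eq_self_iff h₁ h₂, isNoncrossing_wrapConcat h₁ h₂⟩

theorem subpattern_wrapConcat_left (h₁ : IsNatLinkPattern k f₁) :
    subpattern 1 k (wrapConcat k n f₁ f₂) = f₁ := by
  funext i
  by_cases hi : i < 2 * k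
  · rw [subpattern_of_lt _ hi, wrapConcat_of_inner (by omega) (by omega)]
    simp
  · rw [subpattern_of_le _ (not_lt.1 hi), h₁.apply_of_le (not_lt.1 hi)]

theorem subpattern_wrapConcat_right (h₂ : IsNatLinkPattern n f₂) :
    subpattern (2 * k + 2) n (wrapConcat k n f₁ f₂) = f₂ := by
  funext i
  by_cases hi : i < 2 * n
  · rw [subpattern_of_lt _ hi, wrapConcat_of_outer (by omega) (by omega)]
    simp
  · rw [subpattern_of_le _ (not_lt.1 hi), h₂.apply_of_le (not_lt.1 hi)]

end wrapConcat

section firstArc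

variable {n k : ℕ} {f : ℕ → ℕ}

theorem IsNatLinkPattern.mapsTo_inner (hf : IsNatLinkPattern (n + 1) f) (h0 : f 0 = 2 * k + 1)
    {i : ℕ} (hi : 1 ≤ i) (hi' : i < 1 + 2 * k) : 1 ≤ f i ∧ f i < 1 + 2 * k := by
  obtain ⟨h₁, h₂⟩ := hf.2.2.apply_mem_Ioo hf.1 (i := 0) (j := i) (by omega) (by omega)
  omega

theorem IsNatLinkPattern.mapsTo_outer (hf : IsNatLinkPattern (n + 1) f) (h0 : f 0 = 2 * k + 1)
    {i : ℕ} (hi : 2 * k + 2 ≤ i) (hi' : i < 2 * (n + 1)) : 2 * k + 2 ≤ f i ∧ f i < 2 * (n + 1) := by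
  have := hf.apply_zero_lt_apply (by omega) (i := i) (by omega)
  have := hf.apply_lt hi'
  omega

theorem wrapConcat_subpattern (hf : IsNatLinkPattern (n + 1) f) (hk : k ≤ n)
    (h0 : f 0 = 2 * k + 1) :
    wrapConcat k (n - k) (subpattern 1 k f) (subpattern (2 * k + 2) (n - k) f) = f := by
  funext i
  rcases Nat.eq_zero_or_pos i with rfl | hi0
  · rw [wrapConcat_zero, h0]
  rcases lt_trichotomy i (2 * k + 1) with hi | rfl | hi
  · have := hf.mapsTo_inner h0 (i := i) (by omega) (by omega)
    rw [wrapConcat_of_inner hi0 (by omega), subpattern_of_lt f (by omega), Nat.sub_add_cancel hi0]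
    omega
  · rw [wrapConcat_two_mul_add_one, ← h0, hf.1]
  by_cases hi' : i < 2 * (k + (n - k) + 1)
  · have := hf.mapsTo_outer h0 (i := i) (by omega) (by omega)
    rw [wrapConcat_of_outer hi hi', subpattern_of_lt f (by omega),
      Nat.sub_add_cancel (by omega : 2 * k + 2 ≤ i)]
    omega
  · rw [wrapConcat_of_le (not_lt.1 hi'), hf.apply_of_le (by omega)]

def firstArcEquiv (hk : k ≤ n) :
    {f : ℕ → ℕ // IsNatLinkPattern (n + 1) f ∧ f 0 = 2 * k + 1} ≃
      {f : ℕ → ℕ // IsNatLinkPattern k f} × {f : ℕ → ℕ // IsNatLinkPattern (n - k) f} where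
  toFun f :=
    (⟨subpattern 1 k f.1,
        f.2.1.subpattern (by omega) fun _ hi hi' => f.2.1.mapsTo_inner f.2.2 hi hi'⟩,
      ⟨subpattern (2 * k + 2) (n - k) f.1,
        f.2.1.subpattern (by omega) fun _ hi hi' => by
          have := f.2.1.mapsTo_outer f.2.2 hi (by omega)
          omega⟩)
  invFun g := ⟨_, by simpa [show k + (n - k) + 1 = n + 1 by omega] using g.1.2.wrapConcat g.2.2,
    wrapConcat_zero⟩
  left_inv f := Subtype.ext (wrapConcat_subpattern f.2.1 hk f.2.2)
  right_inv g := Prod.ext (Subtype.ext (subpattern_wrapConcat_left g.1.2))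
    (Subtype.ext (subpattern_wrapConcat_right g.2.2))

end firstArc

theorem card_natLinkPattern (n : ℕ) :
    Nat.card {f : ℕ → ℕ // IsNatLinkPattern n f} = catalan n := by
  induction n using Nat.strong_induction_on with
  | _ n ih =>
  cases n with
  | zero =>
    have hid : IsNatLinkPattern 0 id := ⟨fun _ => rfl, fun i => iff_of_true rfl (by omega),
      fun _ _ _ _ hab hbc _ hac _ => (hab.trans hbc).ne hac⟩
    rw [catalan_zero, Nat.card_eq_one_iff_exists]
    exact ⟨⟨id, hid⟩, fun g => Subtype.ext (funext fun i => g.2.apply_of_le (by omega))⟩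
  | succ n =>
    let firstArc (f : {f : ℕ → ℕ // IsNatLinkPattern (n + 1) f}) : Fin (n + 1) :=
      ⟨f.1 0 / 2, by have := f.2.apply_lt (i := 0) (by omega); omega⟩
    have fiber (k : Fin (n + 1)) : {f // firstArc f = k} ≃
        {f : ℕ → ℕ // IsNatLinkPattern (n + 1) f ∧ f 0 = 2 * k + 1} :=
      (Equiv.subtypeEquivRight fun f => by
        obtain ⟨j, -, hj⟩ := f.2.exists_apply_zero_eq
        simp only [firstArc, Fin.ext_iff, hj]
        omega).trans (Equiv.subtypeSubtypeEquivSubtypeInter _ fun f : ℕ → ℕ => f 0 = 2 * k + 1)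
    calc Nat.card {f : ℕ → ℕ // IsNatLinkPattern (n + 1) f}
        = ∑ k : Fin (n + 1), Nat.card {f // firstArc f = k} := by
          rw [← Nat.card_sigma, Nat.card_congr (Equiv.sigmaFiberEquiv firstArc)]
      _ = ∑ k : Fin (n + 1), catalan k * catalan (n - k) := by
          refine sum_congr rfl fun k _ => ?_
          rw [Nat.card_congr ((fiber k).trans (firstArcEquiv (Nat.lt_succ_iff.1 k.2))),
            Nat.card_prod, ih k (by omega), ih (n - k) (by omega)]
      _ = catalan (n + 1) := (catalan_succ n).symm

theorem card_linkPattern (n : ℕ) : Nat.card (LinkPattern n) = catalan n :=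
  (Nat.card_congr (linkPatternEquivNat n)).trans (card_natLinkPattern n)

def swapConj {α : Type*} [DecidableEq α] (x y : α) (μ : α → α) : α → α :=
  fun i => Equiv.swap x y (μ (Equiv.swap x y i))

section swapConj

variable {α : Type*} [DecidableEq α] {x y : α} {μ : α → α}

@[simp] theorem swapConj_self (x : α) (μ : α → α) : swapConj x x μ = μ := by
  funext i; simp [swapConj]

@[simp] theorem swapConj_swapConj (x y : α) (μ : α → α) :
    swapConj x y (swapConj x y μ) = μ := by
  funext i; simp [swapConj]

theorem Function.Involutive.swapConj (h : Involutive μ) : Involutive (swapConj x y μ) := by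
  intro i; simp [_root_.swapConj, h _]

theorem swapConj_ne_self (h : ∀ i, μ i ≠ i) (i : α) : swapConj x y μ i ≠ i := by
  simp only [swapConj, ne_eq, Equiv.swap_apply_eq_iff]
  exact h _

end swapConj

theorem IsLinkPattern.swapConj_of_isNoncrossing {n : ℕ} {μ : Fin (2*n) → Fin (2*n)}
    (h : IsLinkPattern n μ) {x y : Fin (2*n)} (hnc : IsNoncrossing (swapConj x y μ)) :
    IsLinkPattern n (swapConj x y μ) :=
  ⟨h.involutive.swapConj, swapConj_ne_self h.2.1, hnc⟩

def penultSite (m : ℕ) : Fin (2*(m+1)) := ⟨2*m, by omega⟩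

def lastSite (m : ℕ) : Fin (2*(m+1)) := ⟨2*m+1, by omega⟩

@[simp] theorem val_penultSite (m : ℕ) : (penultSite m : ℕ) = 2*m := rfl

@[simp] theorem val_lastSite (m : ℕ) : (lastSite m : ℕ) = 2*m+1 := rfl

section sites

variable {m : ℕ}

abbrev liftSite (j : Fin (2*m)) : Fin (2*(m+1)) := Fin.castLE (by omega) j

theorem penultSite_ne_lastSite : penultSite m ≠ lastSite m := Fin.ne_of_val_ne (by simp)

theorem liftSite_ne_penultSite (j : Fin (2*m)) : liftSite j ≠ penultSite m :=
  Fin.ne_of_val_ne (by simp; omega)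

theorem liftSite_ne_lastSite (j : Fin (2*m)) : liftSite j ≠ lastSite m :=
  Fin.ne_of_val_ne (by simp; omega)

theorem site_cases (i : Fin (2*(m+1))) :
    (∃ j : Fin (2*m), i = liftSite j) ∨ i = penultSite m ∨ i = lastSite m := by
  by_cases h : (i : ℕ) < 2*m
  · exact Or.inl ⟨⟨i, h⟩, rfl⟩
  · right; by_cases h' : (i : ℕ) = 2*m
    · exact Or.inl (Fin.ext h')
    · exact Or.inr (Fin.ext (by simp; omega))

theorem exists_eq_liftSite {i : Fin (2*(m+1))} (hi : (i : ℕ) < 2*m) :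
    ∃ j : Fin (2*m), i = liftSite j :=
  ⟨⟨i, hi⟩, rfl⟩

end sites

theorem eFun_eq_swapConj {m : ℕ} {μ : Fin (2*(m+1)) → Fin (2*(m+1))}
    (h : IsLinkPattern (m+1) μ) :
    eFun (m+1) μ = swapConj (μ (penultSite m)) (lastSite m) μ := by
  have ha : (⟨2*(m+1) - 2, by omega⟩ : Fin (2*(m+1))) = penultSite m := Fin.ext (by simp; omega)
  have hb : (⟨2*(m+1) - 1, by omega⟩ : Fin (2*(m+1))) = lastSite m := Fin.ext (by simp; omega)
  funext i
  simp only [eFun, dif_pos (Nat.le_add_left 1 m), ha, hb]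
  by_cases hab : μ (penultSite m) = lastSite m
  · simp [hab]
  have hinv := h.1
  have hfix := h.2.1
  have hab' := penultSite_ne_lastSite (m := m)
  simp only [hab, if_false, swapConj, Equiv.swap_apply_def]
  split_ifs <;> grind

section insertEnd

variable {m : ℕ} {π : Fin (2*m) → Fin (2*m)}

@[simp] theorem insertEnd_liftSite (j : Fin (2*m)) :
    insertEnd m π (liftSite j) = liftSite (π j) := by
  simp [insertEnd]

@[simp] theorem insertEnd_penultSite : insertEnd m π (penultSite m) = lastSite m := by
  simp [insertEnd]; rfl

@[simp] theorem insertEnd_lastSite : insertEnd m π (lastSite m) = penultSite m := by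
  simp [insertEnd]; rfl

theorem insertEnd_injective : Injective (insertEnd m) := fun π₁ π₂ e =>
  funext fun j => by simpa using congrFun e (liftSite j)

theorem isLinkPattern_insertEnd (h : IsLinkPattern m π) :
    IsLinkPattern (m+1) (insertEnd m π) := by
  refine ⟨fun i => ?_, fun i => ?_, fun a b c d hab hbc hcd hac hbd => ?_⟩
  · rcases site_cases i with ⟨j, rfl⟩ | rfl | rfl <;> simp [h.1 _]
  · rcases site_cases i with ⟨j, rfl⟩ | rfl | rfl
    · simpa using h.2.1 j
    · rw [insertEnd_penultSite]; exact penultSite_ne_lastSite.symm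
    · rw [insertEnd_lastSite]; exact penultSite_ne_lastSite
  · rcases site_cases b with ⟨j, rfl⟩ | rfl | rfl
    · rw [insertEnd_liftSite] at hbd
      subst hbd
      obtain ⟨i, rfl⟩ := exists_eq_liftSite (i := a) (by simp [Fin.lt_def] at hab; omega)
      obtain ⟨k, rfl⟩ := exists_eq_liftSite (i := c) (by simp [Fin.lt_def] at hcd; omega)
      rw [insertEnd_liftSite, Fin.castLE_inj] at hac
      exact h.2.2 i j k (π j) (by simpa using hab) (by simpa using hbc) (by simpa using hcd) hac rfl
    all_goals
      simp only [insertEnd_penultSite, insertEnd_lastSite] at hbd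
      subst hbd
      simp [Fin.lt_def] at hbc hcd
      omega

theorem exists_insertEnd_eq {ν : Fin (2*(m+1)) → Fin (2*(m+1))} (h : IsLinkPattern (m+1) ν)
    (hν : ν (penultSite m) = lastSite m) : ∃ π, IsLinkPattern m π ∧ insertEnd m π = ν := by
  have hν' : ν (lastSite m) = penultSite m := by rw [← hν, h.1]
  have hlift (j : Fin (2*m)) : ∃ j', ν (liftSite j) = liftSite j' := by
    rcases site_cases (ν (liftSite j)) with hj | e | e
    · exact hj
    · exact absurd (by rw [← h.1 (liftSite j), e, hν]) (liftSite_ne_lastSite j)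
    · exact absurd (by rw [← h.1 (liftSite j), e, hν']) (liftSite_ne_penultSite j)
  choose π hπ using hlift
  refine ⟨π, ⟨fun j => ?_, fun j e => ?_, fun a b c d hab hbc hcd hac hbd => ?_⟩, ?_⟩
  · have : liftSite (π (π j)) = liftSite j := by rw [← hπ, ← hπ, h.1]
    simpa using this
  · exact h.2.1 (liftSite j) (by rw [hπ, e])
  · exact h.2.2 (liftSite a) (liftSite b) (liftSite c) (liftSite d) (by simpa using hab)
      (by simpa using hbc) (by simpa using hcd) (by rw [hπ, hac]) (by rw [hπ, hbd])
  · funext i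
    rcases site_cases i with ⟨j, rfl⟩ | rfl | rfl
    · rw [insertEnd_liftSite, hπ]
    · rw [insertEnd_penultSite, hν]
    · rw [insertEnd_lastSite, hν']

end insertEnd

def IsOutermostLink {α : Type*} [LT α] (μ : α → α) (p q : α) : Prop :=
  p < q ∧ μ p = q ∧ ∀ c d, c < p → q < d → μ c ≠ d

abbrev OutermostLinks {α : Type*} [LT α] (μ : α → α) : Type _ :=
  {pq : α × α // IsOutermostLink μ pq.1 pq.2}

section eFun

variable {m : ℕ} {μ ν : Fin (2*(m+1)) → Fin (2*(m+1))}

theorem IsLinkPattern.apply_lastSite_lt_apply_penultSite (h : IsLinkPattern (m+1) μ)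
    (hne : μ (penultSite m) ≠ lastSite m) :
    μ (lastSite m) < μ (penultSite m) ∧ μ (penultSite m) < penultSite m := by
  have ha := h.2.1 (penultSite m)
  have hb := h.2.1 (lastSite m)
  have hba : μ (lastSite m) ≠ penultSite m := fun e => hne (by rw [← e, h.1])
  have hxy : μ (lastSite m) ≠ μ (penultSite m) :=
    fun e => penultSite_ne_lastSite (h.involutive.injective e).symm
  have := val_penultSite m
  have := val_lastSite m
  refine ⟨lt_of_not_ge fun hle => h.2.2 (μ (penultSite m)) (μ (lastSite m)) (penultSite m)
    (lastSite m) (lt_of_le_of_ne hle hxy.symm) ?_ ?_ (h.1 _) (h.1 _), ?_⟩ <;> omega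

theorem IsLinkPattern.isNoncrossing_swapConj_apply_penultSite (h : IsLinkPattern (m+1) μ)
    (hne : μ (penultSite m) ≠ lastSite m) :
    IsNoncrossing (swapConj (μ (penultSite m)) (lastSite m) μ) := by
  obtain ⟨hyx, hxa⟩ := h.apply_lastSite_lt_apply_penultSite hne
  set x := μ (penultSite m)
  set y := μ (lastSite m)
  have hμx : μ x = penultSite m := h.1 _
  have hμy : μ y = lastSite m := h.1 _
  have := val_penultSite m
  have := val_lastSite m
  have hτ : ∀ z, z ≠ x → z ≠ lastSite m → Equiv.swap x (lastSite m) z = z :=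
    fun z h₁ h₂ => Equiv.swap_apply_of_ne_of_ne h₁ h₂
  intro i j k l hij hjk hkl hik hjl
  simp only [swapConj, Equiv.swap_apply_eq_iff] at hik hjl
  have hl : l ≠ lastSite m := by
    rintro rfl
    rw [Equiv.swap_apply_right, h.involutive.eq_iff, hμx, Equiv.swap_apply_eq_iff,
      hτ _ (by omega) (by omega)] at hjl
    omega
  by_cases hi : i = x
  · rw [hi, Equiv.swap_apply_left, hτ k (by omega) (by omega)] at hik
    omega
  by_cases hj : j = x
  · rw [hj, Equiv.swap_apply_left, hτ l (by omega) hl] at hjl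
    omega
  rw [hτ i hi (by omega)] at hik
  rw [hτ j hj (by omega)] at hjl
  by_cases hk : k = x
  · -- the link `(j, l)` of `μ` would cross the link `(x, 2m)`
    rw [hk, Equiv.swap_apply_left, h.involutive.eq_iff] at hik
    rw [hτ l (by omega) hl] at hjl
    obtain ⟨-, h₂⟩ := h.isNoncrossing.apply_mem_Ioo h.involutive (i := j) (j := x) (by omega)
      (by omega)
    have : l ≠ penultSite m := fun e => hj (by rw [← h.1 j, hjl, e])
    omega
  rw [hτ k hk (by omega)] at hik
  by_cases hl' : l = x
  · rw [hl', Equiv.swap_apply_left, h.involutive.eq_iff] at hjl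
    exact h.2.2 i j k (lastSite m) hij hjk (by omega) hik (by rw [hjl, h.1])
  rw [hτ l hl' hl] at hjl
  exact h.2.2 i j k l hij hjk hkl hik hjl

theorem isLinkPattern_eFun (h : IsLinkPattern (m+1) μ) :
    IsLinkPattern (m+1) (eFun (m+1) μ) := by
  rw [eFun_eq_swapConj h]
  by_cases hne : μ (penultSite m) = lastSite m
  · rwa [hne, swapConj_self]
  · exact h.swapConj_of_isNoncrossing (h.isNoncrossing_swapConj_apply_penultSite hne)

theorem eFun_apply_penultSite (h : IsLinkPattern (m+1) μ) :
    eFun (m+1) μ (penultSite m) = lastSite m := by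
  rw [eFun_eq_swapConj h, swapConj,
    Equiv.swap_apply_of_ne_of_ne (h.2.1 _).symm penultSite_ne_lastSite, Equiv.swap_apply_left]

theorem existsUnique_eFun_eq_insertEnd (h : IsLinkPattern (m+1) μ) :
    ∃! π : LinkPattern m, eFun (m+1) μ = insertEnd m π.1 := by
  obtain ⟨π, hπ, e⟩ := exists_insertEnd_eq (isLinkPattern_eFun h) (eFun_apply_penultSite h)
  exact ⟨⟨π, hπ⟩, e.symm, fun π' e' => Subtype.ext (insertEnd_injective (e'.symm.trans e.symm))⟩

theorem swapConj_apply_penultSite (hν : ν (penultSite m) = lastSite m) {q : Fin (2*(m+1))}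
    (hq : penultSite m ≠ q) : swapConj q (lastSite m) ν (penultSite m) = q := by
  simp [swapConj, Equiv.swap_apply_of_ne_of_ne hq penultSite_ne_lastSite, hν]

theorem eFun_swapConj {q : Fin (2*(m+1))} (h : IsLinkPattern (m+1) (swapConj q (lastSite m) ν))
    (hν : ν (penultSite m) = lastSite m) (hq : penultSite m ≠ q) :
    eFun (m+1) (swapConj q (lastSite m) ν) = ν := by
  rw [eFun_eq_swapConj h, swapConj_apply_penultSite hν hq, swapConj_swapConj]

theorem IsLinkPattern.isOutermostLink_eFun (h : IsLinkPattern (m+1) μ)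
    (hne : μ (penultSite m) ≠ lastSite m) :
    IsOutermostLink (eFun (m+1) μ) (μ (lastSite m)) (μ (penultSite m)) := by
  obtain ⟨hyx, hxa⟩ := h.apply_lastSite_lt_apply_penultSite hne
  have := val_penultSite m
  have := val_lastSite m
  rw [eFun_eq_swapConj h]
  refine ⟨hyx, ?_, fun c d hc hd e => ?_⟩
  · rw [swapConj, Equiv.swap_apply_of_ne_of_ne hyx.ne (h.2.1 _), h.1, Equiv.swap_apply_right]
  · rw [swapConj, Equiv.swap_apply_of_ne_of_ne (x := c) (by omega) (by omega),
      Equiv.swap_apply_eq_iff] at e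
    by_cases hd' : d = lastSite m
    · rw [hd', Equiv.swap_apply_right, h.involutive.eq_iff, h.1] at e
      omega
    · rw [Equiv.swap_apply_of_ne_of_ne (by omega) hd'] at e
      exact h.2.2 c _ d (lastSite m) hc (hyx.trans hd) (by omega) e (h.1 _)

theorem IsLinkPattern.isNoncrossing_swapConj_of_isOutermostLink (h : IsLinkPattern (m+1) ν)
    (hν : ν (penultSite m) = lastSite m) {p q : Fin (2*(m+1))} (hpq : IsOutermostLink ν p q)
    (hq : q < penultSite m) : IsNoncrossing (swapConj q (lastSite m) ν) := by
  obtain ⟨hpq, hνp, hout⟩ := hpq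
  have hνq : ν q = p := by rw [← hνp, h.1]
  have hνb : ν (lastSite m) = penultSite m := by rw [← hν, h.1]
  have hleft : ∀ c < p, ν c < p := fun c hc => by
    have := h.isNoncrossing.apply_notMem_Icc h.involutive (i := p) (j := c) (hνp ▸ hpq)
      (fun hc' => hc.not_ge hc'.1)
    simp only [Set.mem_Icc, hνp, not_and_or, not_le] at this
    exact this.resolve_right fun hq' => hout c _ hc hq' rfl
  have := val_penultSite m
  have := val_lastSite m
  have hτ : ∀ z, z ≠ q → z ≠ lastSite m → Equiv.swap q (lastSite m) z = z :=
    fun z h₁ h₂ => Equiv.swap_apply_of_ne_of_ne h₁ h₂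
  intro i j k l hij hjk hkl hik hjl
  simp only [swapConj, Equiv.swap_apply_eq_iff] at hik hjl
  have hk : k ≠ q := fun e => by
    rw [e, Equiv.swap_apply_left, h.involutive.eq_iff, hνb, Equiv.swap_apply_eq_iff,
      hτ _ (by omega) (by omega)] at hik
    omega
  by_cases hl : l = lastSite m
  · rw [hl, Equiv.swap_apply_right, h.involutive.eq_iff, hνq, Equiv.swap_apply_eq_iff,
      hτ p (by omega) (by omega)] at hjl
    rw [hτ i (by omega) (by omega), hτ k hk (by omega)] at hik
    have := hleft i (by omega)
    omega
  have hi : i ≠ q := fun e => by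
    rw [e, Equiv.swap_apply_left, hνb, hτ k hk (by omega)] at hik
    omega
  rw [hτ i hi (by omega), hτ k hk (by omega)] at hik
  by_cases hj : j = q
  · rw [hj, Equiv.swap_apply_left, hνb] at hjl
    have hla := hjl.symm
    rw [Equiv.swap_apply_eq_iff, hτ _ (by omega) (by omega)] at hla
    have hip : i ≠ p := fun e => hk (by rw [← hik, e, hνp])
    rcases lt_or_gt_of_ne hip with hip | hip
    · have := hleft i hip
      omega
    · obtain ⟨-, h₂⟩ := h.isNoncrossing.apply_mem_Ioo h.involutive (i := p) (j := i) hip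
        (by omega)
      omega
  by_cases hl' : l = q
  · rw [hl', Equiv.swap_apply_left, h.involutive.eq_iff, hνb, Equiv.swap_apply_eq_iff,
      hτ _ (by omega) (by omega)] at hjl
    omega
  rw [hτ j hj (by omega), hτ l hl' hl] at hjl
  exact h.2.2 i j k l hij hjk hkl hik hjl

end eFun

section fiber

variable {m : ℕ} {π : Fin (2*m) → Fin (2*m)}

theorem isOutermostLink_insertEnd_iff {p q : Fin (2*m)} :
    IsOutermostLink (insertEnd m π) (liftSite p) (liftSite q) ↔ IsOutermostLink π p q := by
  simp only [IsOutermostLink, insertEnd_liftSite, Fin.castLE_inj, Fin.castLE_lt_castLE_iff]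
  refine and_congr_right fun _ => and_congr_right fun _ =>
    ⟨fun h c d hc hd e => ?_, fun h c d hc hd e => ?_⟩
  · exact h (liftSite c) (liftSite d) (by simpa using hc) (by simpa using hd) (by simp [e])
  · obtain ⟨c, rfl⟩ := exists_eq_liftSite (i := c) (by simp [Fin.lt_def] at hc; omega)
    rw [insertEnd_liftSite] at e
    subst e
    exact h c (π c) (by simpa using hc) (by simpa using hd) rfl

/-- The fiber of `eFun` over `insertEnd m π` consists of the conjugates of `insertEnd m π` by
`swap q (lastSite m)` for `q = fiberSite o`. -/
def fiberSite : Option (OutermostLinks π) → Fin (2*(m+1))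
  | none => lastSite m
  | some l => liftSite l.1.2

theorem penultSite_ne_fiberSite (o : Option (OutermostLinks π)) : penultSite m ≠ fiberSite o := by
  cases o with
  | none => exact penultSite_ne_lastSite
  | some l => exact (liftSite_ne_penultSite _).symm

theorem fiberSite_injective (hπ : IsLinkPattern m π) : Injective (fiberSite (π := π)) := by
  rintro (_ | ⟨⟨p₁, q₁⟩, h₁⟩) (_ | ⟨⟨p₂, q₂⟩, h₂⟩) e <;> simp only [fiberSite] at e
  · rfl
  · exact absurd e.symm (liftSite_ne_lastSite _)
  · exact absurd e (liftSite_ne_lastSite _)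
  · have hq : q₁ = q₂ := by simpa using e
    have hp : p₁ = p₂ := by rw [← hπ.1 p₁, ← hπ.1 p₂, h₁.2.1, h₂.2.1, hq]
    simp [hp, hq]

theorem isLinkPattern_swapConj_fiberSite (hπ : IsLinkPattern m π) (o : Option (OutermostLinks π)) :
    IsLinkPattern (m+1) (swapConj (fiberSite o) (lastSite m) (insertEnd m π)) := by
  cases o with
  | none => simpa [fiberSite] using isLinkPattern_insertEnd hπ
  | some l =>
    have hν := isLinkPattern_insertEnd hπ
    exact hν.swapConj_of_isNoncrossing (hν.isNoncrossing_swapConj_of_isOutermostLink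
      insertEnd_penultSite (isOutermostLink_insertEnd_iff.2 l.2) (by simp [fiberSite, Fin.lt_def]))

theorem exists_fiberSite_eq {μ : Fin (2*(m+1)) → Fin (2*(m+1))} (h : IsLinkPattern (m+1) μ)
    (hμ : eFun (m+1) μ = insertEnd m π) : ∃ o, fiberSite (π := π) o = μ (penultSite m) := by
  by_cases hne : μ (penultSite m) = lastSite m
  · exact ⟨none, hne.symm⟩
  obtain ⟨hyx, hxa⟩ := h.apply_lastSite_lt_apply_penultSite hne
  have hout := h.isOutermostLink_eFun hne
  rw [hμ] at hout
  have := val_penultSite m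
  exact ⟨some ⟨(⟨μ (lastSite m), by omega⟩, ⟨μ (penultSite m), by omega⟩),
    isOutermostLink_insertEnd_iff.1 hout⟩, rfl⟩

noncomputable def fiberEquiv (hπ : IsLinkPattern m π) :
    Option (OutermostLinks π) ≃ {μ : LinkPattern (m+1) // eFun (m+1) μ.1 = insertEnd m π} :=
  Equiv.ofBijective (fun o => ⟨⟨_, isLinkPattern_swapConj_fiberSite hπ o⟩,
      eFun_swapConj (isLinkPattern_swapConj_fiberSite hπ o) insertEnd_penultSite
        (penultSite_ne_fiberSite o)⟩)
    ⟨fun o₁ o₂ e => fiberSite_injective hπ (by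
        have := congrFun (congrArg (fun μ => μ.1.1) e) (penultSite m)
        simpa only [swapConj_apply_penultSite insertEnd_penultSite (penultSite_ne_fiberSite _)]
          using this),
      fun ⟨⟨μ, h⟩, hμ⟩ => by
        obtain ⟨o, ho⟩ := exists_fiberSite_eq h hμ
        refine ⟨o, Subtype.ext (Subtype.ext ?_)⟩
        simp only [ho, ← hμ, eFun_eq_swapConj h, swapConj_swapConj]⟩

theorem card_fiber_eFun (hπ : IsLinkPattern m π) :
    Nat.card {μ : LinkPattern (m+1) // eFun (m+1) μ.1 = insertEnd m π} = exposure m π + 1 := by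
  rw [← Nat.card_congr (fiberEquiv hπ), Finite.card_option]
  rfl

end fiber

theorem card_eq_sum_card_of_existsUnique {α β : Type*} [Finite α] [Fintype β] (r : α → β → Prop)
    (h : ∀ a, ∃! b, r a b) : Nat.card α = ∑ b, Nat.card {a // r a b} := by
  choose f hf using h
  calc Nat.card α = Nat.card (Σ b, {a // f a = b}) :=
        (Nat.card_congr (Equiv.sigmaFiberEquiv f)).symm
    _ = ∑ b, Nat.card {a // f a = b} := Nat.card_sigma
    _ = ∑ b, Nat.card {a // r a b} := sum_congr rfl fun b _ => Nat.card_congr <|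
        Equiv.subtypeEquivRight fun a => ⟨fun e => e ▸ (hf a).1, fun hr => ((hf a).2 b hr).symm⟩

theorem sum_exposure_succ_eq_catalan_general (m : ℕ) :
    (∑ π : {μ : Fin (2*m) → Fin (2*m) // IsLinkPattern m μ}, (exposure m π.1 + 1))
        = catalan (m + 1) ∧
    (∀ μ : Fin (2*(m+1)) → Fin (2*(m+1)), IsLinkPattern (m+1) μ →
        ∃! π : {p : Fin (2*m) → Fin (2*m) // IsLinkPattern m p},
          eFun (m+1) μ = insertEnd m π.1) := by
  refine ⟨?_, fun μ h => existsUnique_eFun_eq_insertEnd h⟩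
  calc ∑ π : LinkPattern m, (exposure m π.1 + 1)
      = ∑ π : LinkPattern m,
          Nat.card {μ : LinkPattern (m+1) // eFun (m+1) μ.1 = insertEnd m π.1} :=
        sum_congr rfl fun π _ => (card_fiber_eFun π.2).symm
    _ = Nat.card (LinkPattern (m+1)) :=
        (card_eq_sum_card_of_existsUnique _ fun μ => existsUnique_eFun_eq_insertEnd μ.2).symm
    _ = catalan (m + 1) := card_linkPattern (m + 1)

/-- For `n = m + 1 ≥ 2`: the sum over all link patterns `π` of `n - 1` strands of
`(exposure number of π) + 1` equals the Catalan number `C_n`; equivalently, the set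
of link patterns of `n` strands is partitioned by the fibers `e⁻¹(π')`, where `π'`
ranges over the insertions of a strand at the end of link patterns of `n - 1`
strands. -/
theorem sum_exposure_succ_eq_catalan (m : ℕ) (hm : 1 ≤ m) :
    (∑ π : {μ : Fin (2*m) → Fin (2*m) // IsLinkPattern m μ}, (exposure m π.1 + 1))
        = catalan (m + 1) ∧
    (∀ μ : Fin (2*(m+1)) → Fin (2*(m+1)), IsLinkPattern (m+1) μ →
        ∃! π : {p : Fin (2*m) → Fin (2*m) // IsLinkPattern m p},
          eFun (m+1) μ = insertEnd m π.1) :=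
  sum_exposure_succ_eq_catalan_general m
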